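/- Let (K, D) be a model of W_e-DCF. Then the kernel of D_{𝐞_1} equals K^p, the subfield of p-th powers of K. -/

import Mathlib

noncomputable section

open scoped BigOperators

/-- The `m`-th Witt addition polynomial with coefficients reduced mod `p`. -/
def wittHmod (p : ℕ) [Fact p.Prime] (m : ℕ) : MvPolynomial (Fin 2 × ℕ) (ZMod p) :=
  MvPolynomial.map (Int.castRingHom (ZMod p)) (WittVector.wittAdd p m)

/-- The exponent (as a finitely supported function) of the monomial `X̄^i * Ȳ^j`,
where `X_{m+1}` is the variable `(0, m)` and `Y_{m+1}` is the variable `(1, m)`. -/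
def xyExp (e : ℕ) (i j : Fin e → ℕ) : (Fin 2 × ℕ) →₀ ℕ :=
  ∑ m : Fin e, (Finsupp.single ((0 : Fin 2), (m : ℕ)) (i m) +
    Finsupp.single ((1 : Fin 2), (m : ℕ)) (j m))

/-- `wittAlpha p e i j l` is the coefficient `α_{i,j}(l) ∈ 𝔽_p` of the monomial `X̄^i * Ȳ^j` in
`H_1^{l_1} ⋯ H_e^{l_e}`, where `H_1, …, H_e` are the polynomials giving the group law of the
`e`-dimensional Witt group over `𝔽_p`. -/
def wittAlpha (p : ℕ) [Fact p.Prime] (e : ℕ) (i j l : Fin e → ℕ) : ZMod p :=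
  MvPolynomial.coeff (xyExp e i j) (∏ m : Fin e, (wittHmod p (m : ℕ)) ^ (l m))

/-- `(K, D)` is a model of `W_e`-DCF:  `K` is a separably closed field of characteristic `p` with
`[K : K^p] = p^e` (where `K^p` is the subfield of `p`-th powers, i.e. the range of the Frobenius)
and `D` is a strict `W_e`-iterative Hasse–Schmidt derivation of dimension `e`.  Multi-indices
`𝐢 ∈ ℕ^e` are represented as functions `Fin e → ℕ`, and the scalars `α_{𝐢,𝐣}(𝐥) ∈ 𝔽_p` act on `K`
via `ZMod.cast` (the iterated sum of `1`). -/
def IsWeDCF (p e : ℕ) [Fact p.Prime] (K : Type*) [Field K] [CharP K p]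
    (D : (Fin e → ℕ) → K → K) : Prop :=
  IsSepClosed K ∧
  Module.finrank ↥(RingHom.fieldRange (frobenius K p)) K = p ^ e ∧
  D 0 = id ∧
  (∀ i : Fin e → ℕ, ∀ x y : K, D i (x + y) = D i x + D i y) ∧
  (∀ i : Fin e → ℕ, ∀ x y : K, D i (x * y) =
     ∑ k ∈ Finset.Iic i, D k x * D (i - k) y) ∧
  (∀ i j : Fin e → ℕ, ∀ x : K,
     D i (D j x) = ∑ᶠ l : Fin e → ℕ, ZMod.cast (wittAlpha p e i j l) * D l x) ∧
  (∀ x : K, (∀ m : Fin e, D (Pi.single m 1) x = 0) ↔ ∃ y : K, x = y ^ p)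

/-!
By strictness it suffices to propagate `D_{𝐞_m} x = 0` from `m` to `m + 1`, and iterativity does
this through the identity `D_{(p-1)𝐞_m} ∘ D_{𝐞_m} = -D_{𝐞_{m+1}}`. Index the Witt coordinates from
`0` as Mathlib does, so that `H_0 = X_0 + Y_0`. To compute `α_{(p-1)𝐞_m, 𝐞_m}(𝐥)`, set the variables
of level `< m` to zero and shift the others down by `m`: since Witt addition commutes with
Verschiebung, this turns `H_k` into `H_{k-m}`, or into `0` when `k < m`. With `X_i, Y_i` of weight
`p^i`, `H_k` is weighted homogeneous of degree `p^k`, so only `𝐥 = p𝐞_m` and `𝐥 = 𝐞_{m+1}` can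
contribute to the coefficient of `X_0^{p-1} Y_0`: the first contributes the binomial coefficient
`p = 0`, the second the coefficient `-1` of `X_0^{p-1} Y_0` in `H_1`.
-/

open MvPolynomial

namespace MvPolynomial.IsWeightedHomogeneous

variable {σ R S M : Type*} [CommSemiring R] [CommSemiring S] [AddCommMonoid M]
  {w : σ → M} {φ : MvPolynomial σ R} {n : M}

theorem map (h : φ.IsWeightedHomogeneous w n) (f : R →+* S) :
    (MvPolynomial.map f φ).IsWeightedHomogeneous w n := fun d hd ↦
  h fun h0 ↦ hd (by rw [coeff_map, h0, map_zero])

theorem of_map {f : R →+* S} (hf : Function.Injective f)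
    (h : (MvPolynomial.map f φ).IsWeightedHomogeneous w n) : φ.IsWeightedHomogeneous w n :=
  fun d hd ↦ h (coeff_map f φ d ▸ map_zero f ▸ hf.ne hd)

end MvPolynomial.IsWeightedHomogeneous

section expXPredY

/-- The exponent of `X_0 ^ (p - 1) * Y_0`, the variables `X_i` and `Y_i` being `(0, i)` and
`(1, i)`. -/
def expXPredY (p : ℕ) : (Fin 2 × ℕ) →₀ ℕ :=
  Finsupp.single (0, 0) (p - 1) + Finsupp.single (1, 0) 1

variable {p : ℕ}

theorem expXPredY_eq_mapDomain : expXPredY p =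
    Finsupp.mapDomain (fun b : Fin 2 ↦ (b, 0)) (Finsupp.single 0 (p - 1) + Finsupp.single 1 1) := by
  rw [Finsupp.mapDomain_add, Finsupp.mapDomain_single, Finsupp.mapDomain_single, expXPredY]

theorem weight_expXPredY (hp : 1 ≤ p) :
    Finsupp.weight (fun v : Fin 2 × ℕ ↦ p ^ v.2) (expXPredY p) = p := by
  rw [expXPredY, map_add, Finsupp.weight_single, Finsupp.weight_single]
  simp [Nat.sub_add_cancel hp]

theorem coeff_expXPredY_add_pow {R : Type*} [CommRing R] (hp : 1 ≤ p) :
    coeff (expXPredY p) ((X (0, 0) + X (1, 0) : MvPolynomial (Fin 2 × ℕ) R) ^ p) = p := by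
  have hinj : Function.Injective fun b : Fin 2 ↦ (b, 0) := fun a b h ↦ (Prod.mk.inj h).1
  have hsum : (X (0, 0) + X (1, 0) : MvPolynomial (Fin 2 × ℕ) R) =
      rename (fun b : Fin 2 ↦ (b, 0)) (X 0 + X 1) := by simp
  rw [hsum, ← map_pow, expXPredY_eq_mapDomain, coeff_rename_mapDomain _ hinj, coeff_add_pow]
  simp [Nat.sub_add_cancel hp, Nat.choose_symm hp]

theorem coeff_expXPredY_X_pow {R : Type*} [CommRing R] {v : Fin 2 × ℕ} {k : ℕ}
    (h : expXPredY p v ≠ k) : coeff (expXPredY p) (X v ^ k : MvPolynomial (Fin 2 × ℕ) R) = 0 := by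
  rw [coeff_X_pow, if_neg]
  rintro hv
  exact h (by rw [← hv, Finsupp.single_eq_same])

theorem xyExp_single_pred_single {e : ℕ} (m : Fin e) :
    xyExp e (Pi.single m (p - 1)) (Pi.single m 1) =
      Finsupp.mapDomain (Prod.map id (· + (m : ℕ))) (expXPredY p) := by
  rw [xyExp, Finset.sum_eq_single m (fun k _ hk ↦ by simp [hk]) (by simp), expXPredY,
    Finsupp.mapDomain_add, Finsupp.mapDomain_single, Finsupp.mapDomain_single]
  simp

end expXPredY

namespace WittVector

theorem isWeightedHomogeneous_rename_wittPolynomial (p : ℕ) {R ι : Type*} [CommRing R] (b : ι)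
    (n : ℕ) :
    (rename (Prod.mk b) (wittPolynomial p R n)).IsWeightedHomogeneous
      (fun v : ι × ℕ ↦ p ^ v.2) (p ^ n) := by
  rw [wittPolynomial_eq_sum_C_mul_X_pow]
  simp only [map_sum, map_mul, rename_C, map_pow, rename_X]
  refine IsWeightedHomogeneous.sum _ _ _ fun i hi ↦ ?_
  have hdeg : p ^ (n - i) • p ^ i = p ^ n := by
    rw [smul_eq_mul, ← pow_add, Nat.sub_add_cancel (Nat.lt_succ_iff.mp (Finset.mem_range.mp hi))]
  have := ((isWeightedHomogeneous_X R (fun v : ι × ℕ ↦ p ^ v.2) (b, i)).pow (p ^ (n - i))).C_mul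
    ((p : R) ^ i)
  rwa [hdeg, map_pow] at this

variable (p : ℕ) [hp : Fact p.Prime]

theorem isWeightedHomogeneous_wittStructureRat_add (n : ℕ) :
    (wittStructureRat p (X 0 + X 1 : MvPolynomial (Fin 2) ℚ) n).IsWeightedHomogeneous
      (fun v : Fin 2 × ℕ ↦ p ^ v.2) (p ^ n) := by
  induction n using Nat.strong_induction_on with
  | _ n ih =>
    rw [wittStructureRat_rec]
    refine IsWeightedHomogeneous.C_mul (IsWeightedHomogeneous.sub ?_ ?_) _
    · simp only [map_add, bind₁_X_right]
      exact (isWeightedHomogeneous_rename_wittPolynomial p 0 n).add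
        (isWeightedHomogeneous_rename_wittPolynomial p 1 n)
    refine IsWeightedHomogeneous.sum _ _ _ fun i hi ↦ ?_
    have hi : i < n := Finset.mem_range.mp hi
    have hdeg : p ^ (n - i) • p ^ i = p ^ n := by
      rw [smul_eq_mul, ← pow_add, Nat.sub_add_cancel hi.le]
    have := ((ih i hi).pow (p ^ (n - i))).C_mul ((p : ℚ) ^ i)
    rwa [hdeg] at this

theorem isWeightedHomogeneous_wittAdd (n : ℕ) :
    (wittAdd p n).IsWeightedHomogeneous (fun v : Fin 2 × ℕ ↦ p ^ v.2) (p ^ n) := by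
  refine IsWeightedHomogeneous.of_map (f := Int.castRingHom ℚ) Int.cast_injective ?_
  rw [wittAdd, map_wittStructureInt, map_add, map_X, map_X]
  exact isWeightedHomogeneous_wittStructureRat_add p n

theorem killCompl_wittAdd (m n : ℕ) :
    killCompl (Function.injective_id.prodMap (add_left_injective m)) (wittAdd p n) =
      if n < m then 0 else wittAdd p (n - m) := by
  -- On the generic Witt vectors `xy b = (X (b, 0), X (b, 1), …)`, `killCompl` acts as
  -- `verschiebung^[m]`, which is additive.
  let xy : Fin 2 → WittVector p (MvPolynomial (Fin 2 × ℕ) ℤ) := fun b ↦ mk p fun i ↦ X (b, i)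
  have hxy : ∀ k, (xy 0 + xy 1).coeff k = wittAdd p k := by
    intro k
    rw [add_coeff, peval]
    conv_rhs => rw [← aeval_X_left_apply (wittAdd p k)]
    congr 2
    funext ⟨b, i⟩
    fin_cases b <;> rfl
  have hX : ∀ v, killCompl (Function.injective_id.prodMap (add_left_injective m))
      (X v : MvPolynomial (Fin 2 × ℕ) ℤ) = (verschiebung^[m] (xy v.1)).coeff v.2 := by
    rintro ⟨b, i⟩
    by_cases hi : i < m
    · rw [iterate_verschiebung_coeff_eq_zero _ hi, killCompl, aeval_X, dif_neg]
      rintro ⟨⟨c, k⟩, hck⟩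
      simp only [Prod.map_apply, Prod.mk.injEq] at hck
      omega
    · obtain ⟨k, rfl⟩ := Nat.exists_eq_add_of_le' (not_lt.mp hi)
      rw [iterate_verschiebung_coeff, coeff_mk,
        show ((b, k + m) : Fin 2 × ℕ) = Prod.map id (· + m) (b, k) from rfl, ← rename_X,
        killCompl_rename_app]
      rfl
  have hV : killCompl (Function.injective_id.prodMap (add_left_injective m)) (wittAdd p n) =
      (verschiebung^[m] (xy 0 + xy 1)).coeff n := by
    rw [iterate_map_add, add_coeff, peval, aeval_unique (killCompl _)]
    congr 2
    funext ⟨b, i⟩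
    fin_cases b <;> exact hX _
  rw [hV]
  split_ifs with hn
  · exact iterate_verschiebung_coeff_eq_zero _ hn
  · obtain ⟨k, rfl⟩ := Nat.exists_eq_add_of_le' (not_lt.mp hn)
    rw [iterate_verschiebung_coeff, hxy, Nat.add_sub_cancel]

theorem coeff_expXPredY_wittAdd_one : MvPolynomial.coeff (expXPredY p) (wittAdd p 1) = -1 := by
  have hp2 := hp.out.two_le
  -- `p H_1 + H_0 ^ p = (p X_1 + X_0 ^ p) + (p Y_1 + Y_0 ^ p)`
  have h := congrArg (MvPolynomial.coeff (expXPredY p))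
    (wittStructureInt_prop p (X 0 + X 1 : MvPolynomial (Fin 2) ℤ) 1)
  change _ = MvPolynomial.coeff _ (bind₁ _ (X 0 + X 1)) at h
  simp only [wittPolynomial_one, map_add, map_mul, map_pow, bind₁_C_right, bind₁_X_right, rename_C,
    rename_X, coeff_add, coeff_C_mul] at h
  change (p : ℤ) * MvPolynomial.coeff _ (wittAdd p 1) + MvPolynomial.coeff _ (wittAdd p 0 ^ p) = _
    at h
  rw [wittAdd_zero, coeff_expXPredY_add_pow (by omega), ← pow_one (X (0, 1)),
    ← pow_one (X (1, 1))] at h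
  rw [coeff_expXPredY_X_pow, coeff_expXPredY_X_pow, coeff_expXPredY_X_pow,
    coeff_expXPredY_X_pow] at h
  · have hp0 : (p : ℤ) ≠ 0 := by exact_mod_cast hp.out.ne_zero
    exact mul_left_cancel₀ hp0 (by linarith)
  all_goals simp [expXPredY] <;> omega

end WittVector

theorem eq_single_or_eq_single_succ_of_sum_mul_pow_eq {e p : ℕ} (hp : 2 ≤ p) {m : Fin e}
    {l : Fin e → ℕ} (hlow : ∀ k < m, l k = 0) (hsum : ∑ k, l k * p ^ (k - m : ℕ) = p) :
    l = Pi.single m p ∨ ∃ k : Fin e, (k : ℕ) = m + 1 ∧ l = Pi.single k 1 := by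
  by_cases h : ∃ k ≠ m, l k ≠ 0
  · obtain ⟨k, hkm, hk⟩ := h
    have hmk : m < k := lt_of_le_of_ne (not_lt.mp fun h ↦ hk (hlow k h)) hkm.symm
    rw [← Finset.add_sum_erase _ _ (Finset.mem_univ k)] at hsum
    have hpow : p ≤ p ^ (k - m : ℕ) := Nat.le_self_pow (by omega) p
    have hterm : p ^ (k - m : ℕ) ≤ l k * p ^ (k - m : ℕ) :=
      Nat.le_mul_of_pos_left _ (Nat.pos_of_ne_zero hk)
    have hlk : l k = 1 :=
      Nat.eq_of_mul_eq_mul_right (by omega : 0 < p ^ (k - m : ℕ)) (by omega)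
    rw [hlk, one_mul] at hsum
    have hkm1 : (k - m : ℕ) = 1 := Nat.pow_right_injective hp (by simp only [pow_one]; omega)
    have hrest : ∀ j ≠ k, l j = 0 := fun j hj ↦ by
      have := Finset.sum_eq_zero_iff.mp
        (show ∑ x ∈ Finset.univ.erase k, l x * p ^ (x - m : ℕ) = 0 by omega) j (by simp [hj])
      simpa [show p ≠ 0 by omega] using this
    refine .inr ⟨k, by omega, funext fun j ↦ ?_⟩
    rcases eq_or_ne j k with rfl | hj
    · simp [hlk]
    · simp [hrest j hj, hj]
  · push Not at h
    rw [Finset.sum_eq_single m (fun k _ hk ↦ by simp [h k hk]) (by simp)] at hsum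
    refine .inl (funext fun j ↦ ?_)
    rcases eq_or_ne j m with rfl | hj
    · simpa using hsum
    · simp [h j hj, hj]

section wittHmod

variable (p : ℕ) [hp : Fact p.Prime]

theorem killCompl_wittHmod (m n : ℕ) :
    killCompl (Function.injective_id.prodMap (add_left_injective m)) (wittHmod p n) =
      if n < m then 0 else wittHmod p (n - m) := by
  rw [wittHmod, killCompl_map, WittVector.killCompl_wittAdd]
  split_ifs <;> simp [wittHmod]

theorem isWeightedHomogeneous_wittHmod (n : ℕ) :
    (wittHmod p n).IsWeightedHomogeneous (fun v : Fin 2 × ℕ ↦ p ^ v.2) (p ^ n) :=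
  (WittVector.isWeightedHomogeneous_wittAdd p n).map _

theorem coeff_expXPredY_wittHmod_zero_pow : coeff (expXPredY p) (wittHmod p 0 ^ p) = 0 := by
  rw [wittHmod, WittVector.wittAdd_zero]
  simp [coeff_expXPredY_add_pow hp.out.one_lt.le]

theorem coeff_expXPredY_wittHmod_one : coeff (expXPredY p) (wittHmod p 1) = -1 := by
  simp [wittHmod, coeff_map, WittVector.coeff_expXPredY_wittAdd_one]

theorem wittAlpha_pred_single_eq_coeff {e : ℕ} (m : Fin e) (l : Fin e → ℕ) :
    wittAlpha p e (Pi.single m (p - 1)) (Pi.single m 1) l =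
      coeff (expXPredY p) (∏ k : Fin e, (if (k : ℕ) < m then 0 else wittHmod p (k - m)) ^ l k) := by
  rw [wittAlpha, xyExp_single_pred_single,
    ← coeff_killCompl (Function.injective_id.prodMap (add_left_injective _)), map_prod]
  simp_rw [map_pow, killCompl_wittHmod]

theorem wittAlpha_pred_single {e : ℕ} {m m' : Fin e} (hm' : (m' : ℕ) = m + 1) (l : Fin e → ℕ) :
    wittAlpha p e (Pi.single m (p - 1)) (Pi.single m 1) l = if l = Pi.single m' 1 then -1 else 0 := by
  rw [wittAlpha_pred_single_eq_coeff]
  split_ifs with hl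
  · subst hl
    rw [Finset.prod_eq_single m' (fun k _ hk ↦ by simp [hk]) (by simp)]
    simp [hm', coeff_expXPredY_wittHmod_one]
  by_cases hlow : ∃ k : Fin e, k < m ∧ l k ≠ 0
  · obtain ⟨k, hkm, hk⟩ := hlow
    rw [Finset.prod_eq_zero (Finset.mem_univ k) (by simp [Fin.lt_def.mp hkm, hk]), coeff_zero]
  push Not at hlow
  by_contra hne
  have hwh := IsWeightedHomogeneous.prod Finset.univ
    (fun k : Fin e ↦ (if (k : ℕ) < m then 0 else wittHmod p (k - m)) ^ l k)
    (fun k ↦ l k * p ^ (k - m : ℕ)) (w := fun v : Fin 2 × ℕ ↦ p ^ v.2) fun k _ ↦ by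
      split_ifs with hk
      · simp [hlow k hk, isWeightedHomogeneous_one]
      · exact (isWeightedHomogeneous_wittHmod p _).pow _
  have hsum := hwh hne
  rw [weight_expXPredY hp.out.one_lt.le] at hsum
  rcases eq_single_or_eq_single_succ_of_sum_mul_pow_eq hp.out.two_le hlow hsum.symm with
    rfl | ⟨k, hk, rfl⟩
  · rw [Finset.prod_eq_single m (fun k _ hk ↦ by simp [hk]) (by simp)] at hne
    simp [coeff_expXPredY_wittHmod_zero_pow] at hne
  · exact hl (by rw [Fin.ext (hk.trans hm'.symm)])

end wittHmod

section HasseSchmidt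

variable {p e : ℕ} [Fact p.Prime] {K : Type*} [Field K] [CharP K p] {D : (Fin e → ℕ) → K → K}

theorem apply_pred_single_comp_single
    (hiter : ∀ i j x, D i (D j x) = ∑ᶠ l, ZMod.cast (wittAlpha p e i j l) * D l x)
    {m m' : Fin e} (hm' : (m' : ℕ) = m + 1) (x : K) :
    D (Pi.single m (p - 1)) (D (Pi.single m 1) x) = -D (Pi.single m' 1) x := by
  rw [hiter, finsum_eq_single _ (Pi.single m' 1) fun l hl ↦ by
    rw [wittAlpha_pred_single p hm', if_neg hl, ZMod.cast_zero, zero_mul]]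
  simp [wittAlpha_pred_single p hm', ZMod.cast_neg (dvd_refl p)]

theorem single_one_eq_zero_of_pred (hadd : ∀ i x y, D i (x + y) = D i x + D i y)
    (hiter : ∀ i j x, D i (D j x) = ∑ᶠ l, ZMod.cast (wittAlpha p e i j l) * D l x)
    {m m' : Fin e} (hm' : (m' : ℕ) = m + 1) {x : K} (hx : D (Pi.single m 1) x = 0) :
    D (Pi.single m' 1) x = 0 := by
  have h0 : D (Pi.single m (p - 1)) 0 = 0 := map_zero (AddMonoidHom.mk' _ (hadd _))
  simpa [hx, h0] using apply_pred_single_comp_single hiter hm' x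

theorem forall_single_one_eq_zero (hadd : ∀ i x y, D i (x + y) = D i x + D i y)
    (hiter : ∀ i j x, D i (D j x) = ∑ᶠ l, ZMod.cast (wittAlpha p e i j l) * D l x)
    {m₀ : Fin e} (hm₀ : (m₀ : ℕ) = 0) {x : K} (hx : D (Pi.single m₀ 1) x = 0) (m : Fin e) :
    D (Pi.single m 1) x = 0 := by
  obtain ⟨j, hj⟩ := m
  induction j with
  | zero => rwa [show (⟨0, hj⟩ : Fin e) = m₀ from Fin.ext hm₀.symm]
  | succ j ih =>
    exact single_one_eq_zero_of_pred hadd hiter (m := ⟨j, by omega⟩) rfl (ih (by omega))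

end HasseSchmidt

/-- In a model of `W_e`-DCF, the kernel of `D_{𝐞_1}` equals `K^p`, the subfield of
`p`-th powers of `K`. -/
theorem WeDCF_ker_first_deriv (p e : ℕ) [Fact p.Prime] (he : 1 ≤ e)
    (K : Type*) [Field K] [CharP K p] (D : (Fin e → ℕ) → K → K)
    (hD : IsWeDCF p e K D) :
    {x : K | D (Pi.single (⟨0, he⟩ : Fin e) 1) x = 0} =
      (RingHom.fieldRange (frobenius K p) : Set K) := by
  obtain ⟨-, -, -, hadd, -, hiter, hstrict⟩ := hD
  ext x
  simp only [Set.mem_ofPred_eq, SetLike.mem_coe, RingHom.mem_fieldRange, frobenius_def]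
  constructor
  · intro hx
    obtain ⟨y, rfl⟩ := (hstrict x).mp (forall_single_one_eq_zero hadd hiter rfl hx)
    exact ⟨y, rfl⟩
  · rintro ⟨y, rfl⟩
    exact (hstrict _).mpr ⟨y, rfl⟩ _
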